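/- For every integer n ≥ 4, 4 · ((n−1)/(4^{n−1} n)) · C(2(n−1), n−1) + ∑_{h=2}^{n−2} ((h−1)/(4^{h−1} h)) · C(2(h−1), h−1) · ((n−h−1)/(4^{n−h−1}(n−h))) · C(2(n−h−1), n−h−1) = 1, as an identity of rational numbers. -/

import Mathlib

/-!
Put `b k = C(2k, k) / 4 ^ k`, the coefficients of `(1 - x) ^ (-1/2)`. Then
`ν(D_{k+1}) = k / (k + 1) * b k = 2 b (k+1) - b k`, and since
`((1 - x) ^ (-1/2)) ^ 2 = 1 / (1 - x)`, every convolution `∑_{i+j=m} b i * b j` equals `1`.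
Expanding the products `ν(D_h) ν(D_{n-h})` turns the sum into four such convolutions with some
boundary terms missing, and those boundary terms cancel exactly against `4 ν(D_n)`.
-/

open Finset

namespace SumNuD

def normCentralBinom (k : ℕ) : ℚ := k.centralBinom / 4 ^ k

local notation "b" => normCentralBinom

lemma normCentralBinom_zero : b 0 = 1 := by simp [normCentralBinom]

lemma two_mul_add_two_mul_normCentralBinom_succ (k : ℕ) :
    (2 * k + 2) * b (k + 1) = (2 * k + 1) * b k := by
  have h : ((k + 1) * (k + 1).centralBinom : ℚ) = 2 * (2 * k + 1) * k.centralBinom := by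
    exact_mod_cast Nat.succ_mul_centralBinom_succ k
  simp only [normCentralBinom, pow_succ]
  field_simp
  linear_combination 2 * h

lemma sum_antidiagonal_add_mul_mul {R : Type*} [CommSemiring R] (w f : ℕ → R) (m : ℕ) :
    ∑ p ∈ antidiagonal m, (w p.1 + w p.2) * (f p.1 * f p.2) =
      2 * ∑ p ∈ antidiagonal m, w p.1 * (f p.1 * f p.2) := by
  rw [two_mul]
  nth_rw 2 [← Nat.sum_antidiagonal_swap]
  simp only [Prod.fst_swap, Prod.snd_swap, add_mul, sum_add_distrib, mul_comm (f _) (f _),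
    add_comm]

theorem sum_antidiagonal_normCentralBinom (m : ℕ) :
    ∑ p ∈ antidiagonal m, b p.1 * b p.2 = 1 := by
  induction m with
  | zero => simp [normCentralBinom_zero]
  | succ m ih =>
    -- Symmetrize the weight `i + j = m + 1`, shift, apply the recurrence, and symmetrize back.
    have key : (m + 1 : ℚ) * ∑ p ∈ antidiagonal (m + 1), b p.1 * b p.2 =
        (m + 1) * ∑ p ∈ antidiagonal m, b p.1 * b p.2 :=
      calc (m + 1 : ℚ) * ∑ p ∈ antidiagonal (m + 1), b p.1 * b p.2
          = ∑ p ∈ antidiagonal (m + 1), ((p.1 : ℚ) + p.2) * (b p.1 * b p.2) := by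
            rw [mul_sum]
            refine sum_congr rfl fun p hp => ?_
            have hp' : (p.1 + p.2 : ℚ) = m + 1 := by exact_mod_cast mem_antidiagonal.mp hp
            rw [hp']
        _ = ∑ p ∈ antidiagonal m, (2 * p.1 + 2 : ℚ) * (b (p.1 + 1) * b p.2) := by
            rw [sum_antidiagonal_add_mul_mul (fun i => (i : ℚ)), Nat.sum_antidiagonal_succ]
            simp only [Nat.cast_zero, zero_mul, zero_add, Nat.cast_add, Nat.cast_one, mul_sum]
            exact sum_congr rfl fun p _ => by ring
        _ = ∑ p ∈ antidiagonal m, ((p.1 + 1 / 2 : ℚ) + (p.2 + 1 / 2)) * (b p.1 * b p.2) := by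
            rw [sum_antidiagonal_add_mul_mul (fun i => (i + 1 / 2 : ℚ)), mul_sum]
            refine sum_congr rfl fun p _ => ?_
            linear_combination b p.2 * two_mul_add_two_mul_normCentralBinom_succ p.1
        _ = (m + 1) * ∑ p ∈ antidiagonal m, b p.1 * b p.2 := by
            rw [mul_sum]
            refine sum_congr rfl fun p hp => ?_
            have hp' : (p.1 + p.2 : ℚ) = m := by exact_mod_cast mem_antidiagonal.mp hp
            linear_combination b p.1 * b p.2 * hp'
    rw [ih, mul_one] at key
    exact mul_left_cancel₀ (by positivity) (key.trans (mul_one _).symm)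

lemma sum_antidiagonal_normCentralBinom_succ_mul (m : ℕ) :
    ∑ p ∈ antidiagonal m, b (p.1 + 1) * b p.2 = 1 - b (m + 1) := by
  have h := sum_antidiagonal_normCentralBinom (m + 1)
  rw [Nat.sum_antidiagonal_succ, normCentralBinom_zero, one_mul] at h
  linarith

lemma sum_antidiagonal_normCentralBinom_mul_succ (m : ℕ) :
    ∑ p ∈ antidiagonal m, b p.1 * b (p.2 + 1) = 1 - b (m + 1) := by
  have h := sum_antidiagonal_normCentralBinom (m + 1)
  rw [Nat.sum_antidiagonal_succ', normCentralBinom_zero, mul_one] at h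
  linarith

lemma sum_antidiagonal_normCentralBinom_succ_mul_succ (m : ℕ) :
    ∑ p ∈ antidiagonal m, b (p.1 + 1) * b (p.2 + 1) = 1 - 2 * b (m + 2) := by
  have h := sum_antidiagonal_normCentralBinom_succ_mul (m + 1)
  rw [Nat.sum_antidiagonal_succ', normCentralBinom_zero, mul_one] at h
  linarith

/-- `ν(D_h)`. It vanishes for `h ≤ 1` (at `h = 0` through division by zero), so the sum over
`Icc 2 (n - 2)` is a full convolution over the antidiagonal. -/
def nuD (h : ℕ) : ℚ :=
  ((h : ℚ) - 1) / (4 ^ (h - 1) * (h : ℚ)) * (Nat.choose (2 * (h - 1)) (h - 1) : ℚ)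

lemma nuD_eq_zero_of_le_one {h : ℕ} (hh : h ≤ 1) : nuD h = 0 := by
  interval_cases h <;> simp [nuD]

lemma nuD_succ (k : ℕ) : nuD (k + 1) = 2 * b (k + 1) - b k := by
  have hb := two_mul_add_two_mul_normCentralBinom_succ k
  have hk : (k + 1 : ℚ) ≠ 0 := by positivity
  have h2 : 2 * b (k + 1) = (2 * k + 1) / (k + 1) * b k := by
    field_simp
    linear_combination hb
  rw [h2, nuD, normCentralBinom, Nat.centralBinom_eq_two_mul_choose]
  push_cast
  field_simp
  ring

lemma sum_antidiagonal_nuD_succ_mul_nuD_succ (m : ℕ) :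
    ∑ p ∈ antidiagonal m, nuD (p.1 + 1) * nuD (p.2 + 1) = 1 - 4 * nuD (m + 2) := by
  calc ∑ p ∈ antidiagonal m, nuD (p.1 + 1) * nuD (p.2 + 1)
      = ∑ p ∈ antidiagonal m, (4 * (b (p.1 + 1) * b (p.2 + 1)) - 2 * (b (p.1 + 1) * b p.2)
          - 2 * (b p.1 * b (p.2 + 1)) + b p.1 * b p.2) :=
        sum_congr rfl fun p _ => by rw [nuD_succ, nuD_succ]; ring
    _ = 4 * (1 - 2 * b (m + 2)) - 2 * (1 - b (m + 1)) - 2 * (1 - b (m + 1)) + 1 := by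
        simp only [sum_add_distrib, sum_sub_distrib, ← mul_sum,
          sum_antidiagonal_normCentralBinom_succ_mul_succ,
          sum_antidiagonal_normCentralBinom_succ_mul,
          sum_antidiagonal_normCentralBinom_mul_succ, sum_antidiagonal_normCentralBinom]
    _ = 1 - 4 * nuD (m + 2) := by rw [nuD_succ]; ring

lemma sum_antidiagonal_nuD_mul_nuD (m : ℕ) :
    ∑ p ∈ antidiagonal (m + 2), nuD p.1 * nuD p.2 = 1 - 4 * nuD (m + 2) := by
  have h0 : nuD 0 = 0 := nuD_eq_zero_of_le_one zero_le_one
  rw [Nat.sum_antidiagonal_succ, Nat.sum_antidiagonal_succ']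
  simp only [h0, zero_mul, mul_zero, zero_add]
  exact sum_antidiagonal_nuD_succ_mul_nuD_succ m

lemma sum_Icc_nuD_mul_nuD (n : ℕ) :
    ∑ h ∈ Icc 2 (n - 2), nuD h * nuD (n - h) = ∑ p ∈ antidiagonal n, nuD p.1 * nuD p.2 := by
  rw [Nat.sum_antidiagonal_eq_sum_range_succ (fun i j => nuD i * nuD j)]
  refine sum_subset (fun h hh => by simp only [mem_Icc] at hh; simp only [mem_range]; omega)
    fun h hr hh => ?_
  simp only [mem_Icc, mem_range] at hr hh
  rcases le_or_gt h 1 with h1 | h1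
  · rw [nuD_eq_zero_of_le_one h1, zero_mul]
  · rw [nuD_eq_zero_of_le_one (by omega : n - h ≤ 1), mul_zero]

end SumNuD

/-- Type `Dₙ` case of the main identity: `4ν(Dₙ) + ∑_{h=2}^{n−2} ν(D_h) ν(D_{n−h}) = 1`. -/
theorem sum_nu_D_eq_one (n : ℕ) (hn : 4 ≤ n) :
    4 * ((((n : ℚ) - 1) / (4 ^ (n - 1) * (n : ℚ))) * (Nat.choose (2 * (n - 1)) (n - 1) : ℚ)) +
      ∑ h ∈ Finset.Icc 2 (n - 2),
        ((((h : ℚ) - 1) / (4 ^ (h - 1) * (h : ℚ))) * (Nat.choose (2 * (h - 1)) (h - 1) : ℚ)) *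
          ((((n : ℚ) - (h : ℚ) - 1) / (4 ^ (n - h - 1) * ((n : ℚ) - (h : ℚ)))) *
            (Nat.choose (2 * (n - h - 1)) (n - h - 1) : ℚ)) = 1 := by
  open SumNuD in
  calc _ = 4 * nuD n + ∑ h ∈ Icc 2 (n - 2), nuD h * nuD (n - h) := by
        congr 1
        refine sum_congr rfl fun h hh => ?_
        rw [nuD, nuD, Nat.cast_sub (by simp only [mem_Icc] at hh; omega)]
    _ = 1 := by
        obtain ⟨m, rfl⟩ : ∃ m, n = m + 2 := ⟨n - 2, by omega⟩
        rw [sum_Icc_nuD_mul_nuD, sum_antidiagonal_nuD_mul_nuD]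
        ring
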